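/- arXiv:2511.14935 — 3 statements merged into one kernel-verified Lean document; each statement's English description precedes it below -/
import Mathlib

section
/- For nonzero vectors x, y in ℂ^n with Im(x*y) = 0, every Hermitian matrix H satisfying Hx = y has spectral norm at least ‖y‖/‖x‖, and this bound is attained: if y = αx for some real α, the matrix H = (y x^H)/(x^H x) is Hermitian, maps x to y, and has norm ‖y‖/‖x‖. -/
open Matrix
set_option maxHeartbeats 1000000
set_option synthInstance.maxHeartbeats 400000

/-- The spectral norm (operator 2-norm) of a complex matrix. -/
noncomputable def specNorm {n : ℕ} (M : Matrix (Fin n) (Fin n) ℂ) : ℝ :=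
  ‖Matrix.toEuclideanCLM (𝕜 := ℂ) (n := Fin n) M‖

/-- The Euclidean norm of a vector in ℂ^n. -/
noncomputable def vnorm {n : ℕ} (x : Fin n → ℂ) : ℝ :=
  Real.sqrt (star x ⬝ᵥ x).re

lemma dot_self_eq {n : ℕ} (x : Fin n → ℂ) :
    star x ⬝ᵥ x = ((‖(WithLp.equiv 2 (Fin n → ℂ)).symm x‖ : ℝ) : ℂ) ^ 2 := by
  rw [WithLp.equiv_symm_apply, dotProduct_comm, ← EuclideanSpace.inner_toLp_toLp]
  exact inner_self_eq_norm_sq_to_K _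

lemma vnorm_eq {n : ℕ} (x : Fin n → ℂ) :
    vnorm x = ‖(WithLp.equiv 2 (Fin n → ℂ)).symm x‖ := by
  rw [vnorm, dot_self_eq, ← Complex.ofReal_pow, Complex.ofReal_re]
  exact Real.sqrt_sq (norm_nonneg _)

lemma vecMulVec_mulVec' {n : ℕ} (a b c : Fin n → ℂ) :
    Matrix.vecMulVec a b *ᵥ c = (b ⬝ᵥ c) • a := by
  funext i
  simp only [Matrix.mulVec, Matrix.vecMulVec_apply, dotProduct, Pi.smul_apply, smul_eq_mul,
    Finset.sum_mul]
  exact Finset.sum_congr rfl fun j _ => by ring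

theorem herm_mapping_min_norm {n : ℕ} (x y : Fin n → ℂ) (hx : x ≠ 0) (hy : y ≠ 0)
    (hxy : (star x ⬝ᵥ y).im = 0) :
    (∀ H : Matrix (Fin n) (Fin n) ℂ, H.IsHermitian → H *ᵥ x = y →
        vnorm y / vnorm x ≤ specNorm H) ∧
    (∀ α : ℝ, y = (α : ℂ) • x →
      (Matrix.IsHermitian ((star x ⬝ᵥ x)⁻¹ • Matrix.vecMulVec y (star x)) ∧
        ((star x ⬝ᵥ x)⁻¹ • Matrix.vecMulVec y (star x)) *ᵥ x = y ∧
        specNorm ((star x ⬝ᵥ x)⁻¹ • Matrix.vecMulVec y (star x)) = vnorm y / vnorm x)) := by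
  set e := (WithLp.equiv 2 (Fin n → ℂ)).symm with he
  have hex : e x ≠ 0 := by simpa [he] using hx
  have hvx : 0 < vnorm x := by rw [vnorm_eq]; exact norm_pos_iff.mpr hex
  have hc : (star x ⬝ᵥ x) = ((vnorm x : ℝ) : ℂ) ^ 2 := by
    rw [vnorm_eq]; exact dot_self_eq x
  have hcne : (star x ⬝ᵥ x) ≠ 0 := by
    rw [hc]; exact pow_ne_zero _ (by exact_mod_cast hvx.ne')
  have part1 : ∀ H : Matrix (Fin n) (Fin n) ℂ, H.IsHermitian → H *ᵥ x = y →
      vnorm y / vnorm x ≤ specNorm H := by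
    intro H _ hHx
    rw [div_le_iff₀ hvx]
    have := (toEuclideanCLM (𝕜 := ℂ) (n := Fin n) H).le_opNorm (e x)
    rw [he, WithLp.equiv_symm_apply, toEuclideanCLM_toLp, hHx] at this
    simpa [specNorm, vnorm_eq, he] using this
  refine ⟨part1, fun α hyx => ?_⟩
  subst hyx
  have hermc : (starRingEnd ℂ) (star x ⬝ᵥ x)⁻¹ = (star x ⬝ᵥ x)⁻¹ := by
    rw [hc, ← Complex.ofReal_pow, ← Complex.ofReal_inv, Complex.conj_ofReal]
  have herm : Matrix.IsHermitian
      ((star x ⬝ᵥ x)⁻¹ • Matrix.vecMulVec ((α : ℂ) • x) (star x)) := by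
    ext i j
    simp only [conjTranspose_apply, Matrix.smul_apply, Matrix.vecMulVec_apply, Pi.smul_apply,
      Pi.star_apply, smul_eq_mul, star_mul', hermc, star_star, Complex.star_def,
      Complex.conj_ofReal, RingHom.map_mul, Complex.conj_conj]
    ring
  have hmv : ((star x ⬝ᵥ x)⁻¹ • Matrix.vecMulVec ((α : ℂ) • x) (star x)) *ᵥ x
      = (α : ℂ) • x := by
    rw [Matrix.smul_mulVec, vecMulVec_mulVec', smul_smul, inv_mul_cancel₀ hcne, one_smul]
  refine ⟨herm, hmv, ?_⟩
  have hvy : vnorm ((α : ℂ) • x) = |α| * vnorm x := by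
    rw [vnorm_eq, vnorm_eq, show e ((α : ℂ) • x) = (α : ℂ) • e x from rfl, norm_smul]
    simp [he]
  apply le_antisymm _ (part1 _ herm hmv)
  rw [hvy, mul_div_assoc, div_self hvx.ne', mul_one]
  apply ContinuousLinearMap.opNorm_le_bound _ (abs_nonneg α)
  intro v
  set w : Fin n → ℂ := WithLp.equiv 2 (Fin n → ℂ) v with hw
  have hv : v = e w := rfl
  rw [hv, he, WithLp.equiv_symm_apply, toEuclideanCLM_toLp, Matrix.smul_mulVec,
    vecMulVec_mulVec', smul_smul]
  rw [show WithLp.toLp 2 (((star x ⬝ᵥ x)⁻¹ * (star x ⬝ᵥ w)) • ((α : ℂ) • x))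
      = ((star x ⬝ᵥ x)⁻¹ * (star x ⬝ᵥ w)) • ((α : ℂ) • e x) from rfl]
  rw [norm_smul, norm_smul]
  have hCS : ‖star x ⬝ᵥ w‖ ≤ vnorm x * ‖e w‖ := by
    rw [dotProduct_comm, ← EuclideanSpace.inner_toLp_toLp (𝕜 := ℂ) x w, vnorm_eq]
    exact norm_inner_le_norm _ _
  have h1 : ‖(star x ⬝ᵥ x)⁻¹‖ = ((vnorm x) ^ 2)⁻¹ := by
    rw [hc, ← Complex.ofReal_pow, ← Complex.ofReal_inv, Complex.norm_real, Real.norm_eq_abs,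
      abs_of_pos (by positivity)]
  rw [norm_mul, h1]
  have hαx : ‖(α : ℂ)‖ * ‖e x‖ = |α| * vnorm x := by
    rw [vnorm_eq, he]; simp
  calc ((vnorm x ^ 2)⁻¹ * ‖star x ⬝ᵥ w‖) * (‖(α : ℂ)‖ * ‖e x‖)
      ≤ ((vnorm x ^ 2)⁻¹ * (vnorm x * ‖e w‖)) * (|α| * vnorm x) := by
        rw [hαx]
        apply mul_le_mul_of_nonneg_right _ (by positivity)
        exact mul_le_mul_of_nonneg_left hCS (by positivity)
    _ = |α| * ‖e w‖ := by field_simp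
end

section
/- For nonzero vectors x, y in ℂ^n, there exists a skew-Hermitian matrix S with Sx = y if and only if the real part of x^H y is zero. -/
/-!
If `Sᴴ = -S` then `xᴴ S x` equals minus its own conjugate, so its real part vanishes.
Conversely, put `μ = xᴴ x` and `c = xᴴ y`. When `c` is purely imaginary, the matrix
`(y xᴴ - x yᴴ) / μ - (c / μ²) x xᴴ` is skew-Hermitian, and it sends `x` to
`y + (c / μ) x - (c / μ) x = y`, because `yᴴ x = conj c = -c`.
-/

open Matrix

theorem RCLike.star_eq_neg_iff {K : Type*} [RCLike K] {z : K} : star z = -z ↔ re z = 0 := by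
  simp [RCLike.ext_iff (K := K), eq_neg_iff_add_eq_zero, ← two_mul]

namespace Matrix

variable {ι 𝕜 : Type*} [Fintype ι]

theorem star_dotProduct_mulVec_self_of_conjTranspose_eq_neg [CommRing 𝕜] [StarRing 𝕜]
    {S : Matrix ι ι 𝕜} (hS : Sᴴ = -S) (x : ι → 𝕜) :
    star (star x ⬝ᵥ S *ᵥ x) = -(star x ⬝ᵥ S *ᵥ x) := by
  rw [← star_dotProduct_star, star_star, star_mulVec, ← dotProduct_mulVec, hS, neg_mulVec,
    dotProduct_neg]

theorem exists_conjTranspose_eq_neg_mulVec_eq [Field 𝕜] [StarRing 𝕜] {x : ι → 𝕜}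
    (hx : star x ⬝ᵥ x ≠ 0) (y : ι → 𝕜) (hxy : star (star x ⬝ᵥ y) = -(star x ⬝ᵥ y)) :
    ∃ S : Matrix ι ι 𝕜, Sᴴ = -S ∧ S *ᵥ x = y := by
  set μ := star x ⬝ᵥ x
  set c := star x ⬝ᵥ y
  have hμ : star μ = μ := (star_dotProduct x x).symm
  have hyx : star y ⬝ᵥ x = -c := by rw [star_dotProduct, hxy]
  refine ⟨μ⁻¹ • (vecMulVec y (star x) - vecMulVec x (star y))
      - (μ⁻¹ * μ⁻¹ * c) • vecMulVec x (star x), ?_, ?_⟩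
  · simp only [conjTranspose_sub, conjTranspose_smul, conjTranspose_vecMulVec, star_star,
      star_mul', star_inv₀, hμ, hxy]
    module
  · simp only [sub_mulVec, smul_mulVec, vecMulVec_mulVec, op_smul_eq_smul, hyx]
    match_scalars <;> field_simp <;> ring

open scoped ComplexOrder in
theorem exists_conjTranspose_eq_neg_mulVec_eq_iff [RCLike 𝕜] {x : ι → 𝕜} (hx : x ≠ 0)
    (y : ι → 𝕜) :
    (∃ S : Matrix ι ι 𝕜, Sᴴ = -S ∧ S *ᵥ x = y) ↔ RCLike.re (star x ⬝ᵥ y) = 0 := by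
  rw [← RCLike.star_eq_neg_iff]
  constructor
  · rintro ⟨S, hS, rfl⟩
    exact star_dotProduct_mulVec_self_of_conjTranspose_eq_neg hS x
  · exact exists_conjTranspose_eq_neg_mulVec_eq (dotProduct_star_self_eq_zero.not.mpr hx) y

end Matrix

theorem skewherm_mapping_exists_general {n : ℕ} (x y : Fin n → ℂ) (hx : x ≠ 0) :
    (∃ S : Matrix (Fin n) (Fin n) ℂ, Sᴴ = -S ∧ S *ᵥ x = y) ↔
      (star x ⬝ᵥ y).re = 0 :=
  exists_conjTranspose_eq_neg_mulVec_eq_iff hx y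

theorem skewherm_mapping_exists {n : ℕ} (x y : Fin n → ℂ) (hx : x ≠ 0) (hy : y ≠ 0) :
    (∃ S : Matrix (Fin n) (Fin n) ℂ, Sᴴ = -S ∧ S *ᵥ x = y) ↔
      (star x ⬝ᵥ y).re = 0 :=
  skewherm_mapping_exists_general x y hx
end

section
/- Let J be skew-Hermitian, R Hermitian positive semidefinite, Q Hermitian positive definite. If x is an eigenvector of (J − R)Q with purely imaginary eigenvalue iω (ω ∈ ℝ), then R Q x = 0 and J Q x = iω x. -/
open Matrix
open scoped ComplexOrder

theorem imaginary_eigvec_kernel {n : ℕ} (J R Q : Matrix (Fin n) (Fin n) ℂ)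
    (hJ : Jᴴ = -J) (hR : R.PosSemidef) (hQ : Q.PosDef)
    (x : Fin n → ℂ) (hx : x ≠ 0) (ω : ℝ)
    (heig : ((J - R) * Q) *ᵥ x = (Complex.I * (ω : ℂ)) • x) :
    R *ᵥ (Q *ᵥ x) = 0 ∧ (J * Q) *ᵥ x = (Complex.I * (ω : ℂ)) • x := by
  set y := Q *ᵥ x with hy
  have h1 : (J - R) *ᵥ y = (Complex.I * (ω : ℂ)) • x := by
    rwa [hy, mulVec_mulVec]
  have hc : (0:ℂ) < star x ⬝ᵥ y := hQ.dotProduct_mulVec_pos hx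
  have hr0 : (0:ℂ) ≤ star y ⬝ᵥ (R *ᵥ y) := hR.dotProduct_mulVec_nonneg y
  have hskew : star (star y ⬝ᵥ (J *ᵥ y)) = -(star y ⬝ᵥ (J *ᵥ y)) := by
    conv_lhs => rw [star_dotProduct, star_star]
    rw [star_mulVec, hJ, vecMul_neg, neg_dotProduct, ← dotProduct_mulVec]
  have hcy : star y ⬝ᵥ x = star x ⬝ᵥ y := by
    rw [hy, star_mulVec, dotProduct_mulVec, hQ.1]
  have E : star y ⬝ᵥ (J *ᵥ y) - star y ⬝ᵥ (R *ᵥ y)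
      = Complex.I * (ω : ℂ) * (star x ⬝ᵥ y) := by
    have := congrArg (fun v => star y ⬝ᵥ v) h1
    simpa [sub_mulVec, dotProduct_sub, dotProduct_smul, smul_eq_mul, hcy,
      mul_assoc] using this
  set a := star y ⬝ᵥ (J *ᵥ y)
  set r := star y ⬝ᵥ (R *ᵥ y)
  set c := star x ⬝ᵥ y
  have hare : a.re = 0 := by
    have h := congrArg Complex.re hskew
    simp only [Complex.star_def, Complex.conj_re, Complex.neg_re] at h
    linarith
  have hcim : c.im = 0 := by
    rw [Complex.lt_def] at hc
    simpa using hc.2.symm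
  have hrim : r.im = 0 := by
    rw [Complex.le_def] at hr0
    simpa using hr0.2.symm
  have hrre : r.re = 0 := by
    have hre := congrArg Complex.re E
    simp [Complex.sub_re, Complex.mul_re, Complex.mul_im, Complex.I_re,
      Complex.I_im, hcim, hare] at hre
    linarith
  have hr : r = 0 := Complex.ext hrre hrim
  have hRy : R *ᵥ y = 0 := (hR.dotProduct_mulVec_zero_iff y).mp hr
  refine ⟨hRy, ?_⟩
  have h2 : (J * Q) *ᵥ x = J *ᵥ y := by rw [hy, mulVec_mulVec]
  have h3 : J *ᵥ y = (J - R) *ᵥ y + R *ᵥ y := by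
    rw [sub_mulVec, sub_add_cancel]
  rw [h2, h3, hRy, h1, add_zero]
end
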